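/- arXiv:2001.04426 — 3 statements merged into one kernel-verified Lean document; each statement's English description precedes it below -/
import Mathlib

section
/- Let n ≥ 2 and let α_1, …, α_n and G_1, …, G_n be positive real numbers. Then Σ_{j=2}^{n} ( α_j · G_j^{j+1} / G_{j-1}^{j-1} − α_{j-1} · G_j^{j} / G_{j-1}^{j-2} ) ≥ (1/2) · ( −(α_1^3/α_2^2)·G_1^2 + (α_{n-1}^{n-1}/α_n^{n-2})·G_n^2 + Σ_{j=2}^{n-1} ( α_{j-1}^{j-1}/α_j^{j-2} − α_j^{j+2}/α_{j+1}^{j+1} )·G_j^2 ). -/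
/-!
Each summand is bounded below separately. With `a = α_{j-1}`, `b = α_j`, `x = G_{j-1}`,
`y = G_j` and `s = b y / (a x)`, the `j`-th summand is `K s^j (s - 1)` and the `j`-th
piece of the right-hand side is `K (s^2 - 1) / 2`, where `K = a^{j+1} x^2 / b^j > 0`; and
`s^2 - 1 ≤ 2 s^j (s - 1)` because `s^j - s^2` and `s^2 - (s + 1)/2` both have the sign of
`s - 1`. The lower bounds
`(α_{j-1}^{j-1} / α_j^{j-2}) G_j^2 - (α_{j-1}^{j+1} / α_j^j) G_{j-1}^2`
then telescope into the right-hand side.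
-/

open Finset

theorem sq_sub_one_le_two_mul_pow_mul_sub_one (m : ℕ) {s : ℝ} (hs : 0 ≤ s) :
    s ^ 2 - 1 ≤ 2 * s ^ (m + 2) * (s - 1) := by
  have hpow : 0 ≤ (s ^ (m + 2) - s ^ 2) * (s - 1) := by
    rcases le_total 1 s with h | h
    · exact mul_nonneg (sub_nonneg.2 (pow_le_pow_right₀ h (by omega))) (sub_nonneg.2 h)
    · exact mul_nonneg_of_nonpos_of_nonpos
        (sub_nonpos.2 (pow_le_pow_of_le_one hs h (by omega))) (sub_nonpos.2 h)
  nlinarith [sq_nonneg (s - 1)]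

theorem schumacher_summand_lower_bound (m : ℕ) {a b x y : ℝ} (ha : 0 < a) (hb : 0 < b)
    (hx : 0 < x) (hy : 0 ≤ y) :
    (a ^ (m + 1) / b ^ m * y ^ 2 - a ^ (m + 3) / b ^ (m + 2) * x ^ 2) / 2
      ≤ b * y ^ (m + 3) / x ^ (m + 1) - a * y ^ (m + 2) / x ^ m := by
  set K := a ^ (m + 3) / b ^ (m + 2) * x ^ 2
  set s := b * y / (a * x)
  have hK : 0 ≤ K := by positivity
  have hs := sq_sub_one_le_two_mul_pow_mul_sub_one m (show 0 ≤ s by positivity)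
  have hlhs : (a ^ (m + 1) / b ^ m * y ^ 2 - a ^ (m + 3) / b ^ (m + 2) * x ^ 2) / 2
      = K * (s ^ 2 - 1) / 2 := by
    simp only [K, s]; field_simp; ring
  have hrhs : b * y ^ (m + 3) / x ^ (m + 1) - a * y ^ (m + 2) / x ^ m
      = K * (s ^ (m + 2) * (s - 1)) := by
    simp only [K, s, div_pow, mul_pow]; field_simp; ring
  rw [hlhs, hrhs]
  nlinarith [mul_le_mul_of_nonneg_left hs hK]

theorem Finset.sum_Icc_two_sub_pred {M : Type*} [AddCommGroup M] (u v : ℕ → M) {n : ℕ}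
    (hn : 2 ≤ n) :
    ∑ j ∈ Icc 2 n, (u j - v (j - 1)) = -v 1 + u n + ∑ j ∈ Icc 2 (n - 1), (u j - v j) := by
  induction n, hn using Nat.le_induction with
  | base =>
    simp only [Icc_self, sum_singleton, Nat.reduceSub, Icc_eq_empty_of_lt one_lt_two, sum_empty]
    abel
  | succ n hn ih =>
    obtain ⟨k, rfl⟩ : ∃ k, n = k + 1 := ⟨n - 1, by omega⟩
    rw [sum_Icc_succ_top (by omega), ih, Nat.add_sub_cancel, Nat.add_sub_cancel,
      sum_Icc_succ_top (by omega)]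
    abel

/-- Schumacher's algebraic lemma (Lemma 17 of [Sch17]). -/
theorem schumacher_lemma (n : ℕ) (hn : 2 ≤ n) (α G : ℕ → ℝ)
    (hα : ∀ j, 1 ≤ j → j ≤ n → 0 < α j) (hG : ∀ j, 1 ≤ j → j ≤ n → 0 < G j) :
    ∑ j ∈ Finset.Icc 2 n,
        (α j * G j ^ (j + 1) / G (j - 1) ^ (j - 1)
          - α (j - 1) * G j ^ j / G (j - 1) ^ (j - 2))
      ≥ (1 / 2) *
        (-(α 1 ^ 3 / α 2 ^ 2) * G 1 ^ 2
          + (α (n - 1) ^ (n - 1) / α n ^ (n - 2)) * G n ^ 2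
          + ∑ j ∈ Finset.Icc 2 (n - 1),
              (α (j - 1) ^ (j - 1) / α j ^ (j - 2)
                - α j ^ (j + 2) / α (j + 1) ^ (j + 1)) * G j ^ 2) := by
  set u : ℕ → ℝ := fun j ↦ α (j - 1) ^ (j - 1) / α j ^ (j - 2) * G j ^ 2
  set v : ℕ → ℝ := fun k ↦ α k ^ (k + 2) / α (k + 1) ^ (k + 1) * G k ^ 2
  have hterm : ∀ j ∈ Icc 2 n, (u j - v (j - 1)) / 2
      ≤ α j * G j ^ (j + 1) / G (j - 1) ^ (j - 1)
          - α (j - 1) * G j ^ j / G (j - 1) ^ (j - 2) := by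
    intro j hj
    obtain ⟨h2j, hjn⟩ := mem_Icc.1 hj
    obtain ⟨m, rfl⟩ : ∃ m, j = m + 2 := ⟨j - 2, by omega⟩
    simpa [u, v] using schumacher_summand_lower_bound m (hα (m + 1) (by omega) (by omega))
      (hα (m + 2) (by omega) hjn) (hG (m + 1) (by omega) (by omega))
      (hG (m + 2) (by omega) hjn).le
  calc _ = ∑ j ∈ Icc 2 n, (u j - v (j - 1)) / 2 := by
        rw [← sum_div, sum_Icc_two_sub_pred u v hn]
        simp only [u, v, sub_mul]
        ring
    _ ≤ _ := sum_le_sum hterm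
end

section
/- Let u_1, …, u_n be positive smooth functions on an open set Ω ⊆ ℂ and α_1, …, α_n > 0 constants. Then at every point of Ω, Δ log(Σ_j α_j u_j) ≥ (Σ_j α_j u_j Δ log u_j) / (Σ_j α_j u_j), where Δ is the Laplacian. -/
open Finset

/-- The Euclidean Laplacian of a function `f : ℂ → ℝ`, computed as the sum of the second
derivatives in the directions `1` and `i`. -/
noncomputable def lap (f : ℂ → ℝ) (z : ℂ) : ℝ :=
  fderiv ℝ (fun w => fderiv ℝ f w 1) z 1 +
    fderiv ℝ (fun w => fderiv ℝ f w Complex.I) z Complex.I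

lemma diffAt_fderiv_apply {f : ℂ → ℝ} {z : ℂ} (hf : ContDiffAt ℝ (⊤ : ℕ∞) f z) (v : ℂ) :
    DifferentiableAt ℝ (fun w => fderiv ℝ f w v) z := by
  have h1 : ContDiffAt ℝ (⊤ : ℕ∞) (fderiv ℝ f) z := hf.fderiv_right (by simp)
  have h2 : DifferentiableAt ℝ (fderiv ℝ f) z := h1.differentiableAt (by simp)
  exact (ContinuousLinearMap.apply ℝ ℝ v).differentiableAt.comp z h2

lemma fderiv_log_apply {f : ℂ → ℝ} {z : ℂ} (hf : DifferentiableAt ℝ f z) (hne : f z ≠ 0)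
    (v : ℂ) : fderiv ℝ (fun w => Real.log (f w)) z v = fderiv ℝ f z v / f z := by
  have h : HasFDerivAt (fun w => Real.log (f w)) ((f z)⁻¹ • fderiv ℝ f z) z :=
    (Real.hasDerivAt_log hne).comp_hasFDerivAt z hf.hasFDerivAt
  rw [h.fderiv]; simp [div_eq_inv_mul]

lemma fderiv_div_apply {A B : ℂ → ℝ} {z : ℂ} (hA : DifferentiableAt ℝ A z)
    (hB : DifferentiableAt ℝ B z) (hne : B z ≠ 0) (v : ℂ) :
    fderiv ℝ (fun w => A w / B w) z v
      = (fderiv ℝ A z v * B z - A z * fderiv ℝ B z v) / (B z) ^ 2 := by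
  have hinv : HasFDerivAt (fun w => (B w)⁻¹) ((-(B z ^ 2)⁻¹) • fderiv ℝ B z) z :=
    (hasDerivAt_inv hne).comp_hasFDerivAt z hB.hasFDerivAt
  have h := hA.hasFDerivAt.mul hinv
  have heq : fderiv ℝ (fun w => A w * (B w)⁻¹) z v
      = (A z • ((-(B z ^ 2)⁻¹) • fderiv ℝ B z) + (B z)⁻¹ • fderiv ℝ A z) v := by
    exact congrArg (fun L => L v) h.fderiv
  simp only [div_eq_mul_inv]
  rw [heq]
  simp only [ContinuousLinearMap.add_apply, ContinuousLinearMap.smul_apply, smul_eq_mul]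
  field_simp
  ring

lemma second_log {f : ℂ → ℝ} {Ω : Set ℂ} (hΩ : IsOpen Ω) (hf : ContDiffOn ℝ (⊤ : ℕ∞) f Ω)
    (hpos : ∀ w ∈ Ω, 0 < f w) {z : ℂ} (hz : z ∈ Ω) (v : ℂ) :
    fderiv ℝ (fun w => fderiv ℝ (fun x => Real.log (f x)) w v) z v
      = fderiv ℝ (fun w => fderiv ℝ f w v) z v / f z - (fderiv ℝ f z v) ^ 2 / (f z) ^ 2 := by
  have hmem : Ω ∈ nhds z := hΩ.mem_nhds hz
  have hct : ∀ w ∈ Ω, ContDiffAt ℝ (⊤ : ℕ∞) f w := fun w hw => (hf w hw).contDiffAt (hΩ.mem_nhds hw)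
  have hev : (fun w => fderiv ℝ (fun x => Real.log (f x)) w v)
      =ᶠ[nhds z] fun w => fderiv ℝ f w v / f w :=
    Filter.eventually_of_mem hmem fun w hw =>
      fderiv_log_apply ((hct w hw).differentiableAt (by simp)) (hpos w hw).ne' v
  rw [hev.fderiv_eq]
  have hA : DifferentiableAt ℝ (fun w => fderiv ℝ f w v) z :=
    diffAt_fderiv_apply (hct z hz) v
  rw [fderiv_div_apply hA ((hct z hz).differentiableAt (by simp)) (hpos z hz).ne' v]
  field_simp [(hpos z hz).ne']

lemma fderiv_sum_apply' {n : ℕ} {u : Fin n → ℂ → ℝ} {α : Fin n → ℝ} {Ω : Set ℂ}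
    (hΩ : IsOpen Ω) (hu : ∀ j, ContDiffOn ℝ (⊤ : ℕ∞) (u j) Ω)
    {w : ℂ} (hw : w ∈ Ω) (v : ℂ) :
    fderiv ℝ (fun x => ∑ j, α j * u j x) w v = ∑ j, α j * fderiv ℝ (u j) w v := by
  have hder : HasFDerivAt (fun x => ∑ j, α j * u j x) (∑ j, α j • fderiv ℝ (u j) w) w :=
    HasFDerivAt.fun_sum fun j _ =>
      ((((hu j) w hw).contDiffAt (hΩ.mem_nhds hw)).differentiableAt (by simp)).hasFDerivAt.const_mul
        (α j)
  rw [hder.fderiv]; simp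

lemma second_sum {n : ℕ} {u : Fin n → ℂ → ℝ} {α : Fin n → ℝ} {Ω : Set ℂ}
    (hΩ : IsOpen Ω) (hu : ∀ j, ContDiffOn ℝ (⊤ : ℕ∞) (u j) Ω)
    {z : ℂ} (hz : z ∈ Ω) (v : ℂ) :
    fderiv ℝ (fun w => fderiv ℝ (fun x => ∑ j, α j * u j x) w v) z v
      = ∑ j, α j * fderiv ℝ (fun w => fderiv ℝ (u j) w v) z v := by
  have hev : (fun w => fderiv ℝ (fun x => ∑ j, α j * u j x) w v)
      =ᶠ[nhds z] fun w => ∑ j, α j * fderiv ℝ (u j) w v :=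
    Filter.eventually_of_mem (hΩ.mem_nhds hz) fun w hw => fderiv_sum_apply' hΩ hu hw v
  rw [hev.fderiv_eq]
  have hder : HasFDerivAt (fun w => ∑ j, α j * fderiv ℝ (u j) w v)
      (∑ j, α j • fderiv ℝ (fun w => fderiv ℝ (u j) w v) z) z :=
    HasFDerivAt.fun_sum fun j _ =>
      (diffAt_fderiv_apply (((hu j) z hz).contDiffAt (hΩ.mem_nhds hz)) v).hasFDerivAt.const_mul
        (α j)
  rw [hder.fderiv]; simp

lemma cs_aux {n : ℕ} (α u a : Fin n → ℝ) (hα : ∀ j, 0 < α j) (hu : ∀ j, 0 < u j) :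
    (∑ j, α j * a j) ^ 2 ≤ (∑ j, α j * u j) * ∑ j, α j / u j * a j ^ 2 := by
  have h := Finset.sum_mul_sq_le_sq_mul_sq Finset.univ
    (fun j => Real.sqrt (α j * u j)) (fun j => Real.sqrt (α j / u j) * a j)
  have h1 : ∀ j, Real.sqrt (α j * u j) * (Real.sqrt (α j / u j) * a j) = α j * a j := by
    intro j
    rw [← mul_assoc, ← Real.sqrt_mul (mul_nonneg (hα j).le (hu j).le)]
    have : α j * u j * (α j / u j) = (α j) ^ 2 := by
      field_simp [(hu j).ne']
    rw [this, Real.sqrt_sq (hα j).le]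
  have h2 : ∀ j, Real.sqrt (α j * u j) ^ 2 = α j * u j := fun j =>
    Real.sq_sqrt (mul_nonneg (hα j).le (hu j).le)
  have h3 : ∀ j, (Real.sqrt (α j / u j) * a j) ^ 2 = α j / u j * a j ^ 2 := by
    intro j
    rw [mul_pow, Real.sq_sqrt (div_nonneg (hα j).le (hu j).le)]
  calc (∑ j, α j * a j) ^ 2
      = (∑ j, Real.sqrt (α j * u j) * (Real.sqrt (α j / u j) * a j)) ^ 2 := by
        simp_rw [h1]
    _ ≤ (∑ j, Real.sqrt (α j * u j) ^ 2) * ∑ j, (Real.sqrt (α j / u j) * a j) ^ 2 := h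
    _ = (∑ j, α j * u j) * ∑ j, α j / u j * a j ^ 2 := by simp_rw [h2, h3]

/-- Schumacher's convexity lemma (Lemma 8 of [Sch12]): the Laplacian of the logarithm of a
positive combination of positive functions dominates the weighted average of the
Laplacians of the logarithms. -/
theorem schumacher_convexity (n : ℕ) (Ω : Set ℂ) (hΩ : IsOpen Ω)
    (u : Fin n → ℂ → ℝ) (α : Fin n → ℝ)
    (hu : ∀ j, ContDiffOn ℝ (⊤ : ℕ∞) (u j) Ω)
    (hupos : ∀ j, ∀ z ∈ Ω, 0 < u j z)
    (hα : ∀ j, 0 < α j) :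
    ∀ z ∈ Ω,
      (∑ j, α j * u j z * lap (fun w => Real.log (u j w)) z) / (∑ j, α j * u j z)
        ≤ lap (fun w => Real.log (∑ j, α j * u j w)) z := by
  intro z hz
  rcases Nat.eq_zero_or_pos n with hn | hn
  · subst hn
    simp [lap]
  haveI : NeZero n := ⟨hn.ne'⟩
  set a : Fin n → ℝ := fun j => fderiv ℝ (u j) z 1 with ha
  set b : Fin n → ℝ := fun j => fderiv ℝ (u j) z Complex.I with hb
  set A : Fin n → ℝ := fun j => fderiv ℝ (fun w => fderiv ℝ (u j) w 1) z 1 with hA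
  set B : Fin n → ℝ := fun j => fderiv ℝ (fun w => fderiv ℝ (u j) w Complex.I) z Complex.I
    with hB
  have huz : ∀ j, 0 < u j z := fun j => hupos j z hz
  have hSpos : ∀ w ∈ Ω, 0 < ∑ j, α j * u j w := fun w hw =>
    Finset.sum_pos (fun j _ => mul_pos (hα j) (hupos j w hw)) Finset.univ_nonempty
  have hSz : (0:ℝ) < ∑ j, α j * u j z := hSpos z hz
  have hSct : ContDiffOn ℝ (⊤ : ℕ∞) (fun w => ∑ j, α j * u j w) Ω :=
    ContDiffOn.sum fun j _ => contDiffOn_const.mul (hu j)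
  -- Laplacian of log of each u j
  have hlapj : ∀ j, lap (fun w => Real.log (u j w)) z
      = (A j + B j) / (u j z) - (a j ^ 2 + b j ^ 2) / (u j z) ^ 2 := by
    intro j
    rw [lap, second_log hΩ (hu j) (hupos j) hz 1, second_log hΩ (hu j) (hupos j) hz Complex.I]
    ring
  -- Laplacian of log of the sum
  have hlapS : lap (fun w => Real.log (∑ j, α j * u j w)) z
      = (∑ j, α j * A j + ∑ j, α j * B j) / (∑ j, α j * u j z)
        - ((∑ j, α j * a j) ^ 2 + (∑ j, α j * b j) ^ 2) / (∑ j, α j * u j z) ^ 2 := by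
    rw [lap, second_log hΩ hSct hSpos hz 1, second_log hΩ hSct hSpos hz Complex.I,
      second_sum hΩ hu hz 1, second_sum hΩ hu hz Complex.I,
      fderiv_sum_apply' hΩ hu hz 1, fderiv_sum_apply' hΩ hu hz Complex.I]
    ring
  -- left-hand side numerator
  have hLHS : ∑ j, α j * u j z * lap (fun w => Real.log (u j w)) z
      = (∑ j, α j * (A j + B j)) - ∑ j, α j / (u j z) * (a j ^ 2 + b j ^ 2) := by
    rw [← Finset.sum_sub_distrib]
    refine Finset.sum_congr rfl fun j _ => ?_
    rw [hlapj j]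
    field_simp [(huz j).ne']
  -- Cauchy–Schwarz
  have key : (∑ j, α j * a j) ^ 2 + (∑ j, α j * b j) ^ 2
      ≤ (∑ j, α j * u j z) * ∑ j, α j / (u j z) * (a j ^ 2 + b j ^ 2) := by
    have k1 := cs_aux α (fun j => u j z) a hα huz
    have k2 := cs_aux α (fun j => u j z) b hα huz
    have : ∑ j, α j / (u j z) * (a j ^ 2 + b j ^ 2)
        = (∑ j, α j / (u j z) * a j ^ 2) + ∑ j, α j / (u j z) * b j ^ 2 := by
      rw [← Finset.sum_add_distrib]
      exact Finset.sum_congr rfl fun j _ => by ring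
    rw [this, mul_add]
    exact add_le_add k1 k2
  rw [hlapS, hLHS]
  set S := ∑ j, α j * u j z
  set L := ∑ j, α j * (A j + B j) with hL
  set Q := ∑ j, α j / (u j z) * (a j ^ 2 + b j ^ 2)
  set P := (∑ j, α j * a j) ^ 2 + (∑ j, α j * b j) ^ 2
  have hL' : ∑ j, α j * A j + ∑ j, α j * B j = L := by
    rw [hL, ← Finset.sum_add_distrib]
    exact Finset.sum_congr rfl fun j _ => by ring
  rw [hL']
  have hdiff : L / S - P / S ^ 2 - (L - Q) / S = (S * Q - P) / S ^ 2 := by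
    field_simp
    ring
  have hnn : (0:ℝ) ≤ (S * Q - P) / S ^ 2 :=
    div_nonneg (by linarith [key]) (sq_nonneg S)
  linarith [hdiff ▸ hnn]
end

section
/- Let φ: [r_0, ∞) → [0, ∞) be a monotone increasing differentiable function and δ > 0. Then the set { r ≥ max(r_0,1) : φ'(r) > max(φ(r), 1)^{1+δ} } has finite Lebesgue measure. -/
/-!
Let `G` be a primitive of the weight `w s = max(s, 1)^{-(1+δ)}`. Since `w` is integrable on every
half-line `(a, ∞)`, `G` is bounded on `[φ(r₀), ∞)`, so `G ∘ φ` is monotone and bounded on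
`[r₀, ∞)`. On the exceptional set its derivative `w(φ r) φ'(r)` is at least `1`, and a Markov
inequality for derivatives of monotone functions bounds the measure of that set by the total
increase of `G ∘ φ`.
-/

open MeasureTheory Set

theorem MonotoneOn.mul_volume_deriv_ge_le_sub {g : ℝ → ℝ} {a b : ℝ} (hab : a ≤ b)
    (hg : MonotoneOn g (Icc a b)) (c : ℝ) :
    ENNReal.ofReal c * volume (Icc a b ∩ {x | c ≤ deriv g x}) ≤ ENNReal.ofReal (g b - g a) := by
  have hg' : MonotoneOn g (uIcc a b) := by rwa [uIcc_of_le hab]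
  have hint : IntegrableOn (deriv g) (Icc a b) :=
    (intervalIntegrable_iff_integrableOn_Icc_of_le hab).1 hg'.intervalIntegrable_deriv
  have hnonneg : 0 ≤ᵐ[volume.restrict (Icc a b)] deriv g := by
    rw [← restrict_Ioo_eq_restrict_Icc]
    filter_upwards [ae_restrict_mem measurableSet_Ioo] with x hx
    rw [Pi.zero_apply, ← derivWithin_of_mem_nhds (Icc_mem_nhds hx.1 hx.2)]
    exact hg.derivWithin_nonneg
  have hincr : ∫ x in Icc a b, deriv g x ≤ g b - g a := by
    have h := hg'.intervalIntegral_deriv_mem_uIcc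
    rw [uIcc_of_le (sub_nonneg.2 (hg (left_mem_Icc.2 hab) (right_mem_Icc.2 hab) hab)),
      intervalIntegral.integral_of_le hab, ← integral_Icc_eq_integral_Ioc] at h
    exact h.2
  calc ENNReal.ofReal c * volume (Icc a b ∩ {x | c ≤ deriv g x})
      ≤ ENNReal.ofReal c *
          volume.restrict (Icc a b) {x | ENNReal.ofReal c ≤ ENNReal.ofReal (deriv g x)} := by
        rw [Measure.restrict_apply' measurableSet_Icc, inter_comm]
        gcongr
        exact ENNReal.ofReal_le_ofReal
    _ ≤ ∫⁻ x in Icc a b, ENNReal.ofReal (deriv g x) :=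
        mul_meas_ge_le_lintegral₀ hint.aemeasurable.ennreal_ofReal _
    _ = ENNReal.ofReal (∫ x in Icc a b, deriv g x) :=
        (ofReal_integral_eq_lintegral_ofReal hint hnonneg).symm
    _ ≤ ENNReal.ofReal (g b - g a) := ENNReal.ofReal_le_ofReal hincr

theorem MonotoneOn.mul_volume_Ici_deriv_ge_le_sub {g : ℝ → ℝ} {a M : ℝ}
    (hg : MonotoneOn g (Ici a)) (hM : ∀ x, a ≤ x → g x ≤ M) (c : ℝ) :
    ENNReal.ofReal c * volume (Ici a ∩ {x | c ≤ deriv g x}) ≤ ENNReal.ofReal (M - g a) := by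
  have hunion : Ici a ∩ {x | c ≤ deriv g x} = ⋃ n : ℕ, Icc a (a + n) ∩ {x | c ≤ deriv g x} := by
    ext x
    simp only [mem_inter_iff, mem_Ici, mem_Icc, mem_iUnion]
    refine ⟨fun ⟨hx, hc⟩ ↦ ?_, fun ⟨_, ⟨hx, _⟩, hc⟩ ↦ ⟨hx, hc⟩⟩
    obtain ⟨n, hn⟩ := exists_nat_ge (x - a)
    exact ⟨n, ⟨hx, by linarith⟩, hc⟩
  have hmono : Monotone fun n : ℕ ↦ Icc a (a + n) ∩ {x | c ≤ deriv g x} := fun m n hmn ↦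
    inter_subset_inter_left _ (Icc_subset_Icc_right (by gcongr))
  rw [hunion, hmono.measure_iUnion, ENNReal.mul_iSup]
  refine iSup_le fun n ↦ ?_
  have han : a ≤ a + n := le_add_of_nonneg_right n.cast_nonneg
  calc ENNReal.ofReal c * volume (Icc a (a + n) ∩ {x | c ≤ deriv g x})
      ≤ ENNReal.ofReal (g (a + n) - g a) :=
        (hg.mono Icc_subset_Ici_self).mul_volume_deriv_ge_le_sub han c
    _ ≤ ENNReal.ofReal (M - g a) := by gcongr; exact hM _ han

theorem continuous_max_one_rpow (p : ℝ) : Continuous fun s : ℝ ↦ max s 1 ^ p :=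
  (continuous_id.max continuous_const).rpow_const fun s ↦ Or.inl (by positivity)

theorem integrableOn_Ioi_max_one_rpow (a : ℝ) {p : ℝ} (hp : p < -1) :
    IntegrableOn (fun s : ℝ ↦ max s 1 ^ p) (Ioi a) := by
  have htail : IntegrableOn (fun s : ℝ ↦ max s 1 ^ p) (Ioi 1) :=
    (integrableOn_Ioi_rpow_of_lt hp one_pos).congr_fun
      (fun s hs ↦ by rw [max_eq_left (mem_Ioi.1 hs).le]) measurableSet_Ioi
  refine (((continuous_max_one_rpow p).integrableOn_Icc (a := min a 1) (b := 1)).union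
    htail).mono_set fun s hs ↦ ?_
  rcases le_or_gt s 1 with h | h
  · exact Or.inl ⟨(min_le_left a 1).trans (le_of_lt hs), h⟩
  · exact Or.inr h

theorem volume_setOf_one_le_mul_deriv_lt_top {w φ : ℝ → ℝ} {r₀ : ℝ} (hw : Continuous w)
    (hw_nonneg : ∀ s, 0 ≤ w s) (hw_int : IntegrableOn w (Ioi (φ r₀)))
    (hφ : MonotoneOn φ (Ici r₀)) (hφd : ∀ r, r₀ ≤ r → DifferentiableAt ℝ φ r) :
    volume {r | r₀ ≤ r ∧ 1 ≤ w (φ r) * deriv φ r} < ⊤ := by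
  set G : ℝ → ℝ := fun t ↦ ∫ s in φ r₀..t, w s
  have hG : ∀ t, HasDerivAt G (w t) t := fun t ↦
    (hw.integral_hasStrictDerivAt _ t).hasDerivAt
  have hG_mono : Monotone G := monotone_of_deriv_nonneg (fun t ↦ (hG t).differentiableAt)
    fun t ↦ (hG t).deriv ▸ hw_nonneg t
  have hG_le : ∀ t, φ r₀ ≤ t → G t ≤ ∫ s in Ioi (φ r₀), w s := fun t ht ↦ by
    simp only [G, intervalIntegral.integral_of_le ht]
    exact setIntegral_mono_set hw_int (Filter.Eventually.of_forall hw_nonneg)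
      Ioc_subset_Ioi_self.eventuallyLE
  have hderiv : ∀ r, r₀ ≤ r → deriv (G ∘ φ) r = w (φ r) * deriv φ r := fun r hr ↦
    ((hG (φ r)).comp r (hφd r hr).hasDerivAt).deriv
  have hbound := (hG_mono.comp_monotoneOn hφ).mul_volume_Ici_deriv_ge_le_sub
    (fun r hr ↦ hG_le (φ r) (hφ self_mem_Ici hr hr)) 1
  rw [ENNReal.ofReal_one, one_mul] at hbound
  refine (measure_mono ?_).trans_lt (hbound.trans_lt ENNReal.ofReal_lt_top)
  rintro r ⟨hr, h1⟩
  refine ⟨hr, ?_⟩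
  rwa [mem_ofPred_eq, hderiv r hr]

theorem borel_growth_lemma_general (r₀ : ℝ) (φ : ℝ → ℝ) (δ : ℝ) (hδ : 0 < δ)
    (hmono : MonotoneOn φ (Set.Ici r₀))
    (hdiff : ∀ r, r₀ ≤ r → DifferentiableAt ℝ φ r) :
    volume {r : ℝ | max r₀ 1 ≤ r ∧ (max (φ r) 1) ^ ((1 : ℝ) + δ) < deriv φ r} < ⊤ := by
  have hp : -(1 + δ) < -1 := by linarith
  refine (measure_mono ?_).trans_lt (volume_setOf_one_le_mul_deriv_lt_top
    (continuous_max_one_rpow _) (fun s ↦ by positivity) (integrableOn_Ioi_max_one_rpow _ hp)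
    hmono hdiff)
  rintro r ⟨hr, hlt⟩
  refine ⟨le_of_max_le_left hr, ?_⟩
  rw [Real.rpow_neg (by positivity), one_le_inv_mul₀ (by positivity)]
  exact hlt.le

/-- E. Borel's growth lemma: for a monotone increasing differentiable function `φ` and
`δ > 0`, the set where `φ'(r) > max(φ(r),1)^{1+δ}` has finite Lebesgue measure. -/
theorem borel_growth_lemma (r₀ : ℝ) (φ : ℝ → ℝ) (δ : ℝ) (hδ : 0 < δ)
    (hmono : MonotoneOn φ (Set.Ici r₀))
    (hnonneg : ∀ r, r₀ ≤ r → 0 ≤ φ r)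
    (hdiff : ∀ r, r₀ ≤ r → DifferentiableAt ℝ φ r) :
    volume {r : ℝ | max r₀ 1 ≤ r ∧ (max (φ r) 1) ^ ((1 : ℝ) + δ) < deriv φ r} < ⊤ :=
  borel_growth_lemma_general r₀ φ δ hδ hmono hdiff
end
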